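/- Let q be a complex number with |q| = 1, let (V₁,V₂) be a q-commutative pair of isometries on a complex Hilbert space H, and set V = V₁V₂. Then for every h ∈ H one has ‖D_{V*}h‖² = ‖D_{V₁*}V₂*h‖² + ‖D_{V₂*}h‖² = ‖D_{V₁*}h‖² + ‖D_{V₂*}V₁*h‖², and the map D_{V*}h ↦ (D_{V₁*}h, D_{V₂*}V₁*h) extends to a well-defined surjective linear isometry (unitary) from 𝒟_{V*} onto 𝒟_{V₁*} ⊕ 𝒟_{V₂*}. -/

import Mathlib

/-!
Write `D_V = 1 - V V*`; for an isometry `V` this is the projection onto `ker V* = 𝒟_{V*}`.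
The identity `D_{V₁V₂} = D_{V₁} + V₁ D_{V₂} V₁*` holds in any star ring, and its two summands are
orthogonal because `V₁* D_{V₁} = 0`; as `V₁` is isometric this gives the second norm identity.
Since `V₁V₂` and `V₂V₁` differ by a unimodular scalar, `D_{V₁V₂} = D_{V₂V₁}`, and the first identity
is the second one with the roles of `V₁, V₂` exchanged. Hence `x ↦ (D_{V₁} x, D_{V₂} V₁* x)` is
isometric on `𝒟_{V*}`, and it is onto since `(a, b)` is the image of `a + V₁ b`.
-/

open ContinuousLinearMap

lemma one_sub_mul_mul_star_mul {R : Type*} [Ring R] [StarRing R] (a b : R) :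
    1 - a * b * star (a * b) = (1 - a * star a) + a * ((1 - b * star b) * star a) := by
  rw [star_mul]; noncomm_ring

lemma smul_mul_star_smul {𝕜 R : Type*} [RCLike 𝕜] [Ring R] [StarRing R] [Algebra 𝕜 R]
    [StarModule 𝕜 R] {q : 𝕜} (hq : ‖q‖ = 1) (b : R) :
    q • b * star (q • b) = b * star b := by
  rw [star_smul, smul_mul_smul_comm, RCLike.star_def, RCLike.mul_conj, hq]
  simp

namespace ContinuousLinearMap

variable {𝕜 H : Type*} [RCLike 𝕜] [NormedAddCommGroup H] [InnerProductSpace 𝕜 H]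
  [CompleteSpace H]

/-- For an isometry `V`, `defect V = D_{V*}² = D_{V*}`. -/
noncomputable def defect (V : H →L[𝕜] H) : H →L[𝕜] H := 1 - V ∘L adjoint V

lemma defect_apply (V : H →L[𝕜] H) (x : H) : defect V x = x - V (adjoint V x) := rfl

lemma defect_comp (V W : H →L[𝕜] H) :
    defect (V ∘L W) = defect V + V ∘L defect W ∘L adjoint V :=
  one_sub_mul_mul_star_mul V W

lemma defect_comp_eq_of_comp_eq_smul {V W : H →L[𝕜] H} {q : 𝕜} (hq : ‖q‖ = 1)
    (hVW : V ∘L W = q • (W ∘L V)) : defect (V ∘L W) = defect (W ∘L V) := by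
  unfold defect
  rw [hVW]
  exact congrArg (1 - ·) (smul_mul_star_smul hq (W ∘L V))

section Isometry

variable {V W : H →L[𝕜] H}

lemma adjoint_apply_apply_of_isometry (hV : adjoint V ∘L V = 1) (x : H) :
    adjoint V (V x) = x :=
  DFunLike.congr_fun hV x

lemma adjoint_comp_self_eq_one_comp (hV : adjoint V ∘L V = 1) (hW : adjoint W ∘L W = 1) :
    adjoint (V ∘L W) ∘L (V ∘L W) = 1 := by
  rw [adjoint_comp]
  ext x
  simp [adjoint_apply_apply_of_isometry hV, adjoint_apply_apply_of_isometry hW]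

lemma adjoint_defect_apply (hV : adjoint V ∘L V = 1) (x : H) : adjoint V (defect V x) = 0 := by
  simp [defect_apply, adjoint_apply_apply_of_isometry hV]

lemma defect_apply_self_apply (hV : adjoint V ∘L V = 1) (x : H) : defect V (V x) = 0 := by
  simp [defect_apply, adjoint_apply_apply_of_isometry hV]

lemma defect_apply_of_adjoint_apply_eq_zero {x : H} (hx : adjoint V x = 0) : defect V x = x := by
  simp [defect_apply, hx]

lemma mem_range_defect_iff (hV : adjoint V ∘L V = 1) {x : H} :
    x ∈ LinearMap.range (defect V : H →ₗ[𝕜] H) ↔ adjoint V x = 0 :=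
  ⟨by rintro ⟨y, rfl⟩; exact adjoint_defect_apply hV y,
    fun hx => ⟨x, defect_apply_of_adjoint_apply_eq_zero hx⟩⟩

lemma norm_add_apply_sq (hV : adjoint V ∘L V = 1) {x : H} (hx : adjoint V x = 0) (y : H) :
    ‖x + V y‖ ^ 2 = ‖x‖ ^ 2 + ‖y‖ ^ 2 := by
  have horth : inner 𝕜 x (V y) = 0 := by rw [← adjoint_inner_left, hx, inner_zero_left]
  rw [norm_add_sq (𝕜 := 𝕜), horth, (norm_map_iff_adjoint_comp_self V).mpr hV y]
  simp

lemma norm_defect_comp_apply_sq (hV : adjoint V ∘L V = 1) (W : H →L[𝕜] H) (x : H) :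
    ‖defect (V ∘L W) x‖ ^ 2 = ‖defect V x‖ ^ 2 + ‖defect W (adjoint V x)‖ ^ 2 := by
  rw [defect_comp, add_apply, comp_apply, comp_apply,
    norm_add_apply_sq hV (adjoint_defect_apply hV x)]

end Isometry

noncomputable def defectSplit (V W : H →L[𝕜] H) :
    H →ₗ[𝕜] WithLp 2
      (LinearMap.range (defect V : H →ₗ[𝕜] H) × LinearMap.range (defect W : H →ₗ[𝕜] H)) :=
  (WithLp.linearEquiv 2 𝕜 _).symm.toLinearMap ∘ₗ
    (defect V).toLinearMap.rangeRestrict.prod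
      ((defect W).toLinearMap.rangeRestrict ∘ₗ (adjoint V).toLinearMap)

lemma defectSplit_apply (V W : H →L[𝕜] H) (x : H) :
    defectSplit V W x =
      WithLp.toLp 2 (⟨defect V x, x, rfl⟩, ⟨defect W (adjoint V x), adjoint V x, rfl⟩) :=
  rfl

section DefectUnitary

variable {V W : H →L[𝕜] H} (hV : adjoint V ∘L V = 1) (hW : adjoint W ∘L W = 1)
include hV hW

lemma defectSplit_apply_apply_apply (x : H) : defectSplit V W (V (W x)) = 0 := by
  rw [defectSplit_apply]
  simp only [defect_apply_self_apply hV, adjoint_apply_apply_of_isometry hV,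
    defect_apply_self_apply hW]
  rfl

lemma defectSplit_defect_comp_apply (x : H) :
    defectSplit V W (defect (V ∘L W) x) = defectSplit V W x := by
  rw [defect_apply, map_sub, comp_apply, defectSplit_apply_apply_apply hV hW, sub_zero]

lemma norm_defectSplit_of_mem_range {x : H}
    (hx : x ∈ LinearMap.range (defect (V ∘L W) : H →ₗ[𝕜] H)) :
    ‖defectSplit V W x‖ = ‖x‖ := by
  have hx' : defect (V ∘L W) x = x := defect_apply_of_adjoint_apply_eq_zero
    ((mem_range_defect_iff (adjoint_comp_self_eq_one_comp hV hW)).mp hx)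
  have hsq : ‖defectSplit V W x‖ ^ 2 = ‖x‖ ^ 2 := by
    rw [WithLp.prod_norm_sq_eq_of_L2, ← hx', norm_defect_comp_apply_sq hV, hx']
    rfl
  exact (sq_eq_sq₀ (norm_nonneg _) (norm_nonneg _)).mp hsq

lemma defectSplit_domRestrict_surjective :
    Function.Surjective
      ((defectSplit V W).domRestrict (LinearMap.range (defect (V ∘L W) : H →ₗ[𝕜] H))) := by
  rintro ⟨a, b⟩
  have ha := (mem_range_defect_iff hV).mp a.2
  have hb := (mem_range_defect_iff hW).mp b.2
  have hmem : (a : H) + V b ∈ LinearMap.range (defect (V ∘L W) : H →ₗ[𝕜] H) := by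
    rw [mem_range_defect_iff (adjoint_comp_self_eq_one_comp hV hW)]
    simp [adjoint_comp, ha, hb, adjoint_apply_apply_of_isometry hV]
  refine ⟨⟨_, hmem⟩, ?_⟩
  rw [LinearMap.domRestrict_apply, defectSplit_apply]
  simp only [map_add, adjoint_apply_apply_of_isometry hV, ha, zero_add, defect_apply_self_apply hV,
    add_zero, defect_apply_of_adjoint_apply_eq_zero ha, defect_apply_of_adjoint_apply_eq_zero hb]

noncomputable def defectUnitary :
    LinearMap.range (defect (V ∘L W) : H →ₗ[𝕜] H) ≃ₗᵢ[𝕜]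
      WithLp 2
        (LinearMap.range (defect V : H →ₗ[𝕜] H) × LinearMap.range (defect W : H →ₗ[𝕜] H)) :=
  LinearIsometryEquiv.ofSurjective
    ⟨(defectSplit V W).domRestrict _, fun x => norm_defectSplit_of_mem_range hV hW x.2⟩
    (defectSplit_domRestrict_surjective hV hW)

lemma defectUnitary_apply (x : LinearMap.range (defect (V ∘L W) : H →ₗ[𝕜] H)) :
    defectUnitary hV hW x = defectSplit V W x :=
  rfl

end DefectUnitary

end ContinuousLinearMap

theorem stmt_1 {H : Type*} [NormedAddCommGroup H] [InnerProductSpace ℂ H] [CompleteSpace H]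
    (q : ℂ) (hq : ‖q‖ = 1) (V₁ V₂ : H →L[ℂ] H)
    (hV₁ : adjoint V₁ ∘L V₁ = 1) (hV₂ : adjoint V₂ ∘L V₂ = 1)
    (hcomm : V₁ ∘L V₂ = q • (V₂ ∘L V₁)) :
    (∀ h : H,
      ‖(1 - (V₁ ∘L V₂) ∘L adjoint (V₁ ∘L V₂)) h‖ ^ 2
          = ‖(1 - V₁ ∘L adjoint V₁) (adjoint V₂ h)‖ ^ 2
            + ‖(1 - V₂ ∘L adjoint V₂) h‖ ^ 2 ∧
      ‖(1 - (V₁ ∘L V₂) ∘L adjoint (V₁ ∘L V₂)) h‖ ^ 2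
          = ‖(1 - V₁ ∘L adjoint V₁) h‖ ^ 2
            + ‖(1 - V₂ ∘L adjoint V₂) (adjoint V₁ h)‖ ^ 2) ∧
    ∃ Φ : (LinearMap.range ((1 : H →L[ℂ] H) - (V₁ ∘L V₂) ∘L adjoint (V₁ ∘L V₂))) ≃ₗᵢ[ℂ]
        WithLp 2 ((LinearMap.range ((1 : H →L[ℂ] H) - V₁ ∘L adjoint V₁))
          × (LinearMap.range ((1 : H →L[ℂ] H) - V₂ ∘L adjoint V₂))),
      ∀ h : H,
        Φ ⟨(1 - (V₁ ∘L V₂) ∘L adjoint (V₁ ∘L V₂)) h, ⟨h, by rfl⟩⟩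
          = (WithLp.equiv 2 _).symm
              (⟨(1 - V₁ ∘L adjoint V₁) h, ⟨h, by rfl⟩⟩,
               ⟨(1 - V₂ ∘L adjoint V₂) (adjoint V₁ h), ⟨adjoint V₁ h, by rfl⟩⟩) := by
  refine ⟨fun h => ⟨?_, norm_defect_comp_apply_sq hV₁ V₂ h⟩, defectUnitary hV₁ hV₂,
    fun h => (defectUnitary_apply hV₁ hV₂ _).trans (defectSplit_defect_comp_apply hV₁ hV₂ h)⟩
  rw [show (1 : H →L[ℂ] H) - (V₁ ∘L V₂) ∘L adjoint (V₁ ∘L V₂) = defect (V₂ ∘L V₁) from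
    defect_comp_eq_of_comp_eq_smul hq hcomm]
  exact (norm_defect_comp_apply_sq hV₂ V₁ h).trans (add_comm _ _)
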